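/- arXiv:1605.09069 — 3 statements merged into one kernel-verified Lean document; each statement's English description precedes it below -/
import Mathlib

section
/- Let G be a group with a finite bound on the orders of its finite subgroups. Then the product of any two finite normal subgroups of G is a finite normal subgroup, and G has a unique maximal finite normal subgroup Δ⁺(G), i.e., a finite normal subgroup containing every finite normal subgroup of G. -/
/-!
Since `B` is normal, `A ⊔ B = A * B` as sets, so the join of two finite normal subgroups is a
finite normal subgroup. The orders of finite normal subgroups are bounded, so one of them, `D`,
has the largest order; for any finite normal `E`, the finite normal subgroup `D ⊔ E` contains `D`
and is no larger, hence equals `D`, i.e. `E ≤ D`.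
-/

open scoped Pointwise

namespace Subgroup

variable {G : Type*} [Group G]

theorem finite_sup_of_normal_right {A B : Subgroup G} [B.Normal] (hA : (A : Set G).Finite)
    (hB : (B : Set G).Finite) : ((A ⊔ B : Subgroup G) : Set G).Finite := by
  rw [mul_normal]
  exact hA.mul hB

theorem exists_greatest_finite_normal {N : ℕ}
    (hbound : ∀ H : Subgroup G, H.Normal → (H : Set G).Finite → Nat.card H ≤ N) :
    ∃ D : Subgroup G, D.Normal ∧ (D : Set G).Finite ∧
      ∀ E : Subgroup G, E.Normal → (E : Set G).Finite → E ≤ D := by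
  set orders : Set ℕ := {n | ∃ H : Subgroup G, H.Normal ∧ (H : Set G).Finite ∧ Nat.card H = n}
  have hbdd : BddAbove orders := ⟨N, by rintro _ ⟨H, hH, hHf, rfl⟩; exact hbound H hH hHf⟩
  have hne : orders.Nonempty := ⟨_, ⊥, inferInstance, Set.finite_singleton 1, rfl⟩
  obtain ⟨D, hD, hDf, hDcard⟩ := Nat.sSup_mem hne hbdd
  refine ⟨D, hD, hDf, fun E hE hEf => ?_⟩
  have hDEf := finite_sup_of_normal_right hDf hEf
  have : Finite (D ⊔ E : Subgroup G) := hDEf.to_subtype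
  have hle : Nat.card (D ⊔ E : Subgroup G) ≤ Nat.card D :=
    hDcard ▸ le_csSup hbdd ⟨D ⊔ E, inferInstance, hDEf, rfl⟩
  rw [eq_of_le_of_card_ge le_sup_left hle]
  exact le_sup_right

end Subgroup

/-- In a group `G` with a finite bound on the orders of finite subgroups, the product of
two finite normal subgroups is a finite normal subgroup, and `G` has a unique maximal
finite normal subgroup `Δ⁺(G)`. -/
theorem stmt3 (G : Type*) [Group G] (N : ℕ)
    (hbound : ∀ H : Subgroup G, (H : Set G).Finite → Nat.card H ≤ N) :
    (∀ A B : Subgroup G, A.Normal → B.Normal → (A : Set G).Finite → (B : Set G).Finite →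
      ∃ C : Subgroup G, C.Normal ∧ (C : Set G).Finite ∧
        (C : Set G) = (A : Set G) * (B : Set G)) ∧
    (∃! D : Subgroup G, D.Normal ∧ (D : Set G).Finite ∧
      ∀ E : Subgroup G, E.Normal → (E : Set G).Finite → E ≤ D) := by
  refine ⟨fun A B hA hB hAf hBf => ⟨A ⊔ B, Subgroup.sup_normal A B,
    Subgroup.finite_sup_of_normal_right hAf hBf, Subgroup.mul_normal A B⟩, ?_⟩
  obtain ⟨D, hD, hDf, hDmax⟩ := Subgroup.exists_greatest_finite_normal fun H _ => hbound H
  refine ⟨D, ⟨hD, hDf, hDmax⟩, ?_⟩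
  rintro D' ⟨hD', hD'f, hD'max⟩
  exact le_antisymm (hDmax D' hD' hD'f) (hD'max D hD hDf)
end

section
/- Let G be a group with maximal finite normal subgroup Δ⁺(G) and let M be a finite subgroup of maximal order among finite subgroups of G. Then there exist finitely many elements g₁,…,gₙ ∈ G such that Δ⁺(G) = ⋂_{k=1}^{n} g_k M g_k⁻¹. -/
/-!
A finite normal subgroup `N` lies in every finite subgroup `H` of maximal order, since
`H ⊔ N = H * N` is again finite. Hence `Δ⁺(G)` is the normal core of `M`, i.e. the intersection
of all conjugates of `M`. That intersection is already attained by finitely many conjugates: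
each of the finitely many elements of `M` outside the core is excluded by a single conjugate.
-/

namespace Subgroup

variable {G : Type*} [Group G]

theorem exists_finset_iInf_eq_iInf {ι : Type*} (f : ι → Subgroup G) {i₀ : ι}
    (hfin : (f i₀ : Set G).Finite) : ∃ t : Finset ι, i₀ ∈ t ∧ ⨅ i ∈ t, f i = ⨅ i, f i := by
  classical
  have hwitness : ∀ x, ∃ i, x ∈ ⨅ i, f i ∨ x ∉ f i := fun x => by
    by_cases hx : x ∈ ⨅ i, f i
    · exact ⟨i₀, .inl hx⟩
    · obtain ⟨i, hi⟩ := not_forall.1 (mt mem_iInf.2 hx)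
      exact ⟨i, .inr hi⟩
  choose j hj using hwitness
  refine ⟨insert i₀ (hfin.toFinset.image j), Finset.mem_insert_self _ _,
    le_antisymm (fun x hx => ?_) (le_iInf₂ fun i _ => iInf_le f i)⟩
  have hmem : ∀ i ∈ insert i₀ (hfin.toFinset.image j), x ∈ f i := by
    simpa only [mem_iInf] using hx
  have hx₀ : x ∈ f i₀ := hmem i₀ (Finset.mem_insert_self _ _)
  exact (hj x).resolve_right fun hxj =>
    hxj (hmem _ (Finset.mem_insert_of_mem (Finset.mem_image_of_mem j (hfin.mem_toFinset.2 hx₀))))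

theorem exists_fin_iInf_eq_iInf {ι : Type*} (f : ι → Subgroup G) {i₀ : ι}
    (hfin : (f i₀ : Set G).Finite) :
    ∃ (n : ℕ) (_ : 0 < n) (g : Fin n → ι), ⨅ k, f (g k) = ⨅ i, f i := by
  obtain ⟨t, hi₀, ht⟩ := exists_finset_iInf_eq_iInf f hfin
  refine ⟨t.card, Finset.card_pos.2 ⟨i₀, hi₀⟩, fun k => t.equivFin.symm k, ?_⟩
  rw [← ht, t.equivFin.symm.iInf_comp (g := fun i : t => f i), iInf_subtype']

theorem Normal.le_of_forall_card_le {H N : Subgroup G} (hN : N.Normal)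
    (hH : (H : Set G).Finite) (hNfin : (N : Set G).Finite)
    (hmax : ∀ K : Subgroup G, (K : Set G).Finite → Nat.card K ≤ Nat.card H) : N ≤ H := by
  have hfin : ((H ⊔ N : Subgroup G) : Set G).Finite := by
    rw [mul_normal H N]
    exact hH.mul hNfin
  have : Finite ↥(H ⊔ N) := hfin.to_subtype
  have hsup : H = H ⊔ N := eq_of_le_of_card_ge le_sup_left (hmax _ hfin)
  exact le_sup_right.trans hsup.ge

end Subgroup

theorem stmt5_general (G : Type*) [Group G]
    (D : Subgroup G) (hDnorm : D.Normal) (hDfin : (D : Set G).Finite)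
    (hDmax : ∀ E : Subgroup G, E.Normal → (E : Set G).Finite → E ≤ D)
    (M : Subgroup G) (hMfin : (M : Set G).Finite)
    (hMmax : ∀ H : Subgroup G, (H : Set G).Finite → Nat.card H ≤ Nat.card M) :
    ∃ (n : ℕ) (_ : 0 < n) (g : Fin n → G),
      D = ⨅ k : Fin n, Subgroup.map (MulAut.conj (g k)).toMonoidHom M := by
  have hcore : D = M.normalCore := le_antisymm
    (Subgroup.normal_le_normalCore.2 (hDnorm.le_of_forall_card_le hMfin hDfin hMmax))
    (hDmax _ M.normalCore_normal (hMfin.subset M.normalCore_le))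
  obtain ⟨n, hn, g, hg⟩ := Subgroup.exists_fin_iInf_eq_iInf
    (fun g : G => M.map (MulAut.conj g).toMonoidHom) (i₀ := 1) (by simpa using hMfin)
  refine ⟨n, hn, g, ?_⟩
  rw [hg, hcore, Subgroup.normalCore_eq_iInf_map_conj]
  rfl

/-- If `D = Δ⁺(G)` is the maximal finite normal subgroup of `G` (orders of finite
subgroups being bounded) and `M` is a finite subgroup of maximal order, then `D` is the
intersection of finitely many conjugates of `M`. -/
theorem stmt5 (G : Type*) [Group G] (N : ℕ)
    (hbound : ∀ H : Subgroup G, (H : Set G).Finite → Nat.card H ≤ N)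
    (D : Subgroup G) (hDnorm : D.Normal) (hDfin : (D : Set G).Finite)
    (hDmax : ∀ E : Subgroup G, E.Normal → (E : Set G).Finite → E ≤ D)
    (M : Subgroup G) (hMfin : (M : Set G).Finite)
    (hMmax : ∀ H : Subgroup G, (H : Set G).Finite → Nat.card H ≤ Nat.card M) :
    ∃ (n : ℕ) (_ : 0 < n) (g : Fin n → G),
      D = ⨅ k : Fin n, Subgroup.map (MulAut.conj (g k)).toMonoidHom M :=
  stmt5_general G D hDnorm hDfin hDmax M hMfin hMmax
end

section
/- Let G be a finite group and K a subfield of ℂ closed under complex conjugation. For every matrix A ∈ Mat_n(K[G]), the orthogonal projection onto the kernel of A (acting on K[G]^n with the inner product making the group-element basis orthonormal) has matrix entries in K[G], i.e., pr_{ker A} ∈ Mat_n(K[G]). -/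
/-- The star operation `(∑ a_g g)* = ∑ conj(a_g) g⁻¹` on `ℂ[G]`. -/
noncomputable def gaStar {G : Type*} [Group G] (f : MonoidAlgebra ℂ G) :
    MonoidAlgebra ℂ G :=
  MonoidAlgebra.ofCoeff
    (Finsupp.equivMapDomain (Equiv.inv G) (f.coeff.mapRange (starRingEnd ℂ) (map_zero _)))

/-!
Put `B = A Aᴴ`. A row vector is killed by `A` iff it is killed by `B`, because the coefficient
of `1` in `f f*` is `∑ g, |f_g|²`; the same positivity gives `y B² = 0 → y B = 0`. The entries
of `B` lie in the finite-dimensional `K`-algebra `K[G]`, so `B` is annihilated by a monic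
`p ∈ K[X]`; writing `p = X^k r` with `r(0) ≠ 0`, positivity upgrades `r(B) B^k = 0` to
`r(B) B = 0`. For `f = r / r(0)` the matrix `P = f(B)` satisfies `P = 1 + B h(B)` and
`P B = B P = 0`. Hence `P² = P`, `P* P = P` (so `P* = P`), and `x P = x ↔ x B = 0`; and `P`
has entries in `K[G]`, being a polynomial over `K` in `B`.
-/

open Polynomial Matrix ComplexConjugate

namespace MonoidAlgebra

section Star

variable {G : Type*} [Group G]

lemma coeff_gaStar (f : MonoidAlgebra ℂ G) (g : G) :
    (gaStar f).coeff g = conj (f.coeff g⁻¹) := by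
  simp [gaStar, Finsupp.equivMapDomain_apply]

lemma gaStar_zero : gaStar (0 : MonoidAlgebra ℂ G) = 0 := by
  ext g
  simp [coeff_gaStar]

lemma gaStar_add (f h : MonoidAlgebra ℂ G) : gaStar (f + h) = gaStar f + gaStar h := by
  ext g
  simp [coeff_gaStar]

lemma gaStar_single (g : G) (c : ℂ) : gaStar (single g c) = single g⁻¹ (conj c) := by
  classical
  ext k
  simp only [coeff_gaStar, coeff_single, Finsupp.single_apply, inv_eq_iff_eq_inv, eq_comm (a := g)]
  split_ifs <;> simp

lemma gaStar_mul (a b : MonoidAlgebra ℂ G) : gaStar (a * b) = gaStar b * gaStar a := by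
  induction a using induction_linear with
  | zero => simp [gaStar_zero]
  | add a a' ha ha' => rw [add_mul, gaStar_add, ha, ha', gaStar_add, mul_add]
  | single g c =>
    induction b using induction_linear with
    | zero => simp [gaStar_zero]
    | add b b' hb hb' => rw [mul_add, gaStar_add, hb, hb', gaStar_add, add_mul]
    | single h d =>
      simp only [single_mul_single, gaStar_single, _root_.mul_inv_rev, map_mul, mul_comm]

noncomputable instance : StarRing (MonoidAlgebra ℂ G) where
  star := gaStar
  star_involutive f := by ext; simp [coeff_gaStar]
  star_mul := gaStar_mul
  star_add := gaStar_add

lemma star_eq_gaStar (f : MonoidAlgebra ℂ G) : star f = gaStar f := rfl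

lemma coeff_one_mul_star [Fintype G] (f : MonoidAlgebra ℂ G) :
    (f * star f).coeff 1 = ∑ g, (Complex.normSq (f.coeff g) : ℂ) := by
  rw [coeff_mul_apply_left, Finsupp.sum_fintype _ _ (by simp)]
  simp [star_eq_gaStar, coeff_gaStar, Complex.mul_conj]

variable [Fintype G] {m n : Type*} [Fintype n]

lemma eq_zero_of_dotProduct_star_self_eq_zero {v : n → MonoidAlgebra ℂ G}
    (hv : v ⬝ᵥ star v = 0) : v = 0 := by
  have hsum : ∑ i, ∑ g, Complex.normSq ((v i).coeff g) = 0 := by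
    have := congrArg (fun f : MonoidAlgebra ℂ G => f.coeff 1) hv
    simp only [dotProduct, Pi.star_apply, coeff_sum, Finsupp.finsetSum_apply,
      coeff_one_mul_star, coeff_zero, Finsupp.coe_zero, Pi.zero_apply] at this
    exact_mod_cast this
  have hnonneg : ∀ i, 0 ≤ ∑ g, Complex.normSq ((v i).coeff g) :=
    fun i => Finset.sum_nonneg fun g _ => Complex.normSq_nonneg _
  funext i
  ext g
  have hi := (Finset.sum_eq_zero_iff_of_nonneg fun i _ => hnonneg i).1 hsum i (Finset.mem_univ i)
  have hig := (Finset.sum_eq_zero_iff_of_nonneg fun g _ => Complex.normSq_nonneg _).1 hi g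
    (Finset.mem_univ g)
  exact Complex.normSq_eq_zero.1 hig

lemma eq_zero_of_mul_conjTranspose_self_eq_zero {N : Matrix m n (MonoidAlgebra ℂ G)}
    (hN : N * Nᴴ = 0) : N = 0 := by
  funext i
  have hii : N i ⬝ᵥ star (N i) = (N * Nᴴ) i i := by
    rw [mul_apply']
    rfl
  exact eq_zero_of_dotProduct_star_self_eq_zero (hii.trans (congrFun₂ hN i i))

lemma vecMul_mul_conjTranspose_self_eq_zero_iff [Fintype m] {x : m → MonoidAlgebra ℂ G}
    {A : Matrix m n (MonoidAlgebra ℂ G)} : x ᵥ* (A * Aᴴ) = 0 ↔ x ᵥ* A = 0 := by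
  refine ⟨fun h => eq_zero_of_dotProduct_star_self_eq_zero ?_, fun h => by
    rw [← vecMul_vecMul, h, zero_vecMul]⟩
  rw [star_vecMul, dotProduct_mulVec, vecMul_vecMul, h, zero_dotProduct]

lemma mul_eq_zero_of_mul_mul_eq_zero [Fintype m] {B : Matrix n n (MonoidAlgebra ℂ G)}
    (hB : IsSelfAdjoint B) {Y : Matrix m n (MonoidAlgebra ℂ G)} (h : Y * B * B = 0) :
    Y * B = 0 := by
  refine eq_zero_of_mul_conjTranspose_self_eq_zero ?_
  rw [conjTranspose_mul, ← star_eq_conjTranspose B, hB.star_eq, ← Matrix.mul_assoc, h,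
    Matrix.zero_mul]

end Star

section Coefficients

variable {L : Type*} [Field L] (K : Subfield L) (n G : Type*) [Fintype n] [DecidableEq n]
  [Monoid G]

noncomputable def matrixSubalgebra : Subalgebra K (Matrix n n (MonoidAlgebra L G)) :=
  (mapAlgHom G (Algebra.ofId K L)).mapMatrix.range

variable {K n G}

lemma mem_matrixSubalgebra_iff [Finite G] {M : Matrix n n (MonoidAlgebra L G)} :
    M ∈ matrixSubalgebra K n G ↔ ∀ i j g, (M i j).coeff g ∈ K := by
  rw [matrixSubalgebra, AlgHom.mem_range]
  refine ⟨?_, fun h => ⟨Matrix.of fun i j =>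
    ofCoeff (Finsupp.equivFunOnFinite.symm fun g => ⟨(M i j).coeff g, h i j g⟩), ?_⟩⟩
  · rintro ⟨M₀, rfl⟩ i j g
    simp only [AlgHom.mapMatrix_apply, map_apply, coeff_mapAlgHom]
    exact ((M₀ i j).coeff g).2
  · ext i j g
    simp only [AlgHom.mapMatrix_apply, map_apply, Matrix.of_apply, coeff_mapAlgHom,
      Finsupp.equivFunOnFinite_symm_apply_apply, Algebra.ofId_apply]
    rfl

lemma isIntegral_of_mem_matrixSubalgebra [Finite G] {M : Matrix n n (MonoidAlgebra L G)}
    (hM : M ∈ matrixSubalgebra K n G) : IsIntegral K M := by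
  obtain ⟨M₀, rfl⟩ := (AlgHom.mem_range _).1 hM
  exact (IsIntegral.of_finite K M₀).map _

lemma conjTranspose_mem_matrixSubalgebra {G : Type*} [Group G] [Finite G] {K : Subfield ℂ}
    (hK : ∀ x ∈ K, conj x ∈ K) {M : Matrix n n (MonoidAlgebra ℂ G)}
    (hM : M ∈ matrixSubalgebra K n G) : Mᴴ ∈ matrixSubalgebra K n G := by
  rw [mem_matrixSubalgebra_iff] at hM ⊢
  intro i j g
  simpa [star_eq_gaStar, coeff_gaStar] using hK _ (hM j i g⁻¹)

end Coefficients

end MonoidAlgebra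

lemma mul_eq_zero_of_mul_pow_eq_zero {M : Type*} [MonoidWithZero M] {b : M}
    (hb : ∀ y : M, y * b * b = 0 → y * b = 0) {y : M} {k : ℕ}
    (h : y * b ^ k = 0) : y * b = 0 := by
  have key : ∀ k : ℕ, y * b ^ (k + 1) = 0 → y * b = 0 := by
    intro k
    induction k with
    | zero => simp
    | succ k ih =>
      intro h
      refine ih ?_
      rw [pow_succ, ← mul_assoc]
      exact hb _ (by rwa [pow_succ, pow_succ, ← mul_assoc, ← mul_assoc] at h)
  exact key k (by rw [pow_succ, ← mul_assoc, h, zero_mul])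

namespace Polynomial

section

variable {K R : Type*} [Field K] [Ring R] [Algebra K R] {b : R}

lemma exists_coeff_zero_eq_one_aeval_mul_eq_zero (hint : IsIntegral K b)
    (hb : ∀ y : R, y * b * b = 0 → y * b = 0) :
    ∃ f : K[X], f.coeff 0 = 1 ∧ aeval b f * b = 0 := by
  obtain ⟨p, hp_monic, hp⟩ := hint
  obtain ⟨r, hpr, hr⟩ := p.exists_eq_pow_rootMultiplicity_mul_and_not_dvd hp_monic.ne_zero 0
  rw [map_zero, sub_zero] at hpr hr
  have hr0 : r.coeff 0 ≠ 0 := mt X_dvd_iff.2 hr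
  have hrb : aeval b r * b ^ rootMultiplicity 0 p = 0 := by
    rw [← aeval_def, hpr, mul_comm, map_mul, map_pow, aeval_X] at hp
    exact hp
  refine ⟨C (r.coeff 0)⁻¹ * r, by simp [hr0], ?_⟩
  rw [map_mul, aeval_C, mul_assoc, mul_eq_zero_of_mul_pow_eq_zero hb hrb, mul_zero]

end

section

variable {K R : Type*} [CommRing K] [Ring R] [Algebra K R] {b : R} {f : K[X]}

lemma aeval_eq_one_add_mul_aeval_divX (hf0 : f.coeff 0 = 1) :
    aeval b f = 1 + b * aeval b f.divX := by
  conv_lhs => rw [← X_mul_divX_add f]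
  rw [hf0, C_1, map_add, map_mul, aeval_X, map_one, add_comm]

lemma mul_aeval_eq_zero (hf : aeval b f * b = 0) : b * aeval b f = 0 :=
  calc b * aeval b f = aeval b (X * f) := by rw [map_mul, aeval_X]
    _ = aeval b (f * X) := by rw [mul_comm]
    _ = 0 := by rw [map_mul, aeval_X, hf]

lemma isIdempotentElem_aeval (hf0 : f.coeff 0 = 1) (hf : aeval b f * b = 0) :
    IsIdempotentElem (aeval b f) := by
  unfold IsIdempotentElem
  nth_rewrite 2 [aeval_eq_one_add_mul_aeval_divX hf0]
  rw [mul_add, mul_one, ← mul_assoc, hf, zero_mul, add_zero]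

lemma isSelfAdjoint_aeval [StarRing R] (hb : IsSelfAdjoint b) (hf0 : f.coeff 0 = 1)
    (hf : aeval b f * b = 0) : IsSelfAdjoint (aeval b f) := by
  have hstar : star (aeval b f) = 1 + star (aeval b f.divX) * b := by
    rw [aeval_eq_one_add_mul_aeval_divX hf0, star_add, star_one, star_mul, hb.star_eq]
  have key : star (aeval b f) * aeval b f = aeval b f := by
    rw [hstar, add_mul, one_mul, mul_assoc, mul_aeval_eq_zero hf, mul_zero, add_zero]
  calc star (aeval b f) = star (star (aeval b f) * aeval b f) := by rw [key]
    _ = star (aeval b f) * aeval b f := by rw [star_mul, star_star]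
    _ = aeval b f := key

lemma vecMul_aeval_eq_self_iff {S : Type*} [Ring S] [Algebra K S] {n : Type*} [Fintype n]
    [DecidableEq n] {B : Matrix n n S} (hf0 : f.coeff 0 = 1) (hf : aeval B f * B = 0)
    (x : n → S) : x ᵥ* aeval B f = x ↔ x ᵥ* B = 0 := by
  constructor
  · intro h
    rw [← h, vecMul_vecMul, hf, vecMul_zero]
  · intro h
    rw [aeval_eq_one_add_mul_aeval_divX hf0, vecMul_add, vecMul_one, ← vecMul_vecMul, h,
      zero_vecMul, add_zero]

end

end Polynomial

open MonoidAlgebra Polynomial in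
/-- Let `G` be a finite group and `K ⊆ ℂ` a subfield closed under complex conjugation.
For every matrix `A ∈ Mat_n(K[G])`, the orthogonal projection onto `ker A` (the
self-adjoint idempotent matrix `P` whose fixed row vectors are exactly the kernel of
`A`, for the inner product making the group-element basis orthonormal) again has all
its entries in `K[G]`. -/
theorem stmt17 (G : Type*) [Group G] [Fintype G] (K : Subfield ℂ)
    (hK : ∀ x ∈ K, starRingEnd ℂ x ∈ K) (n : ℕ)
    (A : Matrix (Fin n) (Fin n) (MonoidAlgebra ℂ G))
    (hA : ∀ i j g, (A i j).coeff g ∈ K) :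
    ∃ P : Matrix (Fin n) (Fin n) (MonoidAlgebra ℂ G),
      (∀ i j g, (P i j).coeff g ∈ K) ∧
      P * P = P ∧
      (∀ i j, gaStar (P i j) = P j i) ∧
      ∀ x : Fin n → MonoidAlgebra ℂ G,
        Matrix.vecMul x A = 0 ↔ Matrix.vecMul x P = x := by
  set B := A * Aᴴ
  have hB : IsSelfAdjoint B := by simp [B, IsSelfAdjoint, star_eq_conjTranspose]
  have hAK : A ∈ matrixSubalgebra K (Fin n) G := mem_matrixSubalgebra_iff.2 hA
  have hBK : B ∈ matrixSubalgebra K (Fin n) G :=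
    mul_mem hAK (conjTranspose_mem_matrixSubalgebra hK hAK)
  obtain ⟨f, hf0, hf⟩ := exists_coeff_zero_eq_one_aeval_mul_eq_zero
    (isIntegral_of_mem_matrixSubalgebra hBK) fun _ => mul_eq_zero_of_mul_mul_eq_zero hB
  have hPK : aeval B f ∈ matrixSubalgebra K (Fin n) G :=
    Algebra.adjoin_le (Set.singleton_subset_iff.2 hBK) (aeval_mem_adjoin_singleton K B)
  refine ⟨aeval B f, mem_matrixSubalgebra_iff.1 hPK, isIdempotentElem_aeval hf0 hf,
    fun i j => ?_, fun x => ?_⟩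
  · rw [← star_eq_gaStar, ← Matrix.star_apply, (isSelfAdjoint_aeval hB hf0 hf).star_eq]
  · rw [vecMul_aeval_eq_self_iff hf0 hf, vecMul_mul_conjTranspose_self_eq_zero_iff]
end
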